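/- Let g, h, G, H : ℝ^n → ℝ be convex, let X ⊆ ℝ^n be a nonempty closed convex set, and let β ≥ 0. Let x̄ ∈ X satisfy G(x̄) ≤ H(x̄), and let s_h ∈ ∂h(x̄) and s_H ∈ ∂H(x̄). Assume the Slater condition: there exists x̂ ∈ X with G(x̂) − H(x̄) − ⟨s_H, x̂ − x̄⟩ < 0. If x̄ minimizes u ↦ g(u) − ⟨s_h, u − x̄⟩ + (β/2)‖u − x̄‖² over {u ∈ X : G(u) − H(x̄) − ⟨s_H, u − x̄⟩ ≤ 0}, then there exists λ ≥ 0 such that λ(G(x̄) − H(x̄)) = 0 and there exist s_g ∈ ∂g(x̄), s_G ∈ ∂G(x̄), and v ∈ N_X(x̄) with s_g − s_h + λ(s_G − s_H) + v = 0; that is, x̄ is a KKT point of the DC constrained DC program min{g(x) − h(x) : x ∈ X, G(x) − H(x) ≤ 0}. -/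

import Mathlib

open scoped RealInnerProductSpace

/-- The convex subdifferential of `φ : ℝ^n → ℝ` at `x`. -/
def subdiff {n : ℕ} (φ : EuclideanSpace ℝ (Fin n) → ℝ) (x : EuclideanSpace ℝ (Fin n)) :
    Set (EuclideanSpace ℝ (Fin n)) :=
  {s | ∀ y, φ x + ⟪s, y - x⟫ ≤ φ y}

/-- The normal cone of the convex set `X` at `x`. -/
def normalCone {n : ℕ} (X : Set (EuclideanSpace ℝ (Fin n))) (x : EuclideanSpace ℝ (Fin n)) :
    Set (EuclideanSpace ℝ (Fin n)) :=
  {v | ∀ y ∈ X, ⟪v, y - x⟫ ≤ 0}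

/-!
The linearized subproblem is a convex program. Its proximal term is of second order along
segments, so `x̄` already minimizes `φ = g - ⟪sh, · - x̄⟫` on the linearized feasible set
`{ψ ≤ 0} ∩ X`. Under Slater's condition the supremum of the rates `(φ x̄ - φ w) / ψ w` over the
infeasible points `w ∈ X` is a Lagrange multiplier `λ`, so `x̄` minimizes
`g + λ G - ⟪sh + λ sH, · - x̄⟫` over `X`. Separating the strict epigraph of one convex summand
from the hypograph of minus the others splits off a subgradient of that summand; doing this for
`g` and then for `λ G` leaves a linear function that is nonnegative on `X - x̄`, i.e. a normal
vector of `X` at `x̄`.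
-/

open Set Filter Topology

section NormedSpace

variable {E : Type*} [NormedAddCommGroup E] [NormedSpace ℝ E]

theorem ConvexOn.isMinOn_of_isMinOn_add_mul_norm_sq {s : Set E} {f : E → ℝ} {x : E}
    (hf : ConvexOn ℝ s f) (hx : x ∈ s) (c : ℝ)
    (hmin : IsMinOn (fun y => f y + c * ‖y - x‖ ^ 2) s x) : IsMinOn f s x := by
  refine isMinOn_iff.2 fun y hy => ?_
  have hsegment : ∀ t ∈ Ioc (0 : ℝ) 1, f x - f y ≤ c * t * ‖y - x‖ ^ 2 := by
    rintro t ⟨ht0, ht1⟩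
    have hz : x + t • (y - x) = (1 - t) • x + t • y := by module
    have hmin_t := isMinOn_iff.1 hmin _ (hf.1.add_smul_sub_mem hx hy ⟨ht0.le, ht1⟩)
    have hconv := hf.2 hx hy (sub_nonneg.2 ht1) ht0.le (sub_add_cancel 1 t)
    simp only [sub_self, norm_zero, add_sub_cancel_left, norm_smul, Real.norm_of_nonneg ht0.le,
      smul_eq_mul] at hmin_t hconv
    rw [hz] at hmin_t
    nlinarith
  have hlim : Tendsto (fun t : ℝ => c * t * ‖y - x‖ ^ 2) (𝓝[>] 0) (𝓝 0) := by
    have : Tendsto (fun t : ℝ => c * t * ‖y - x‖ ^ 2) (𝓝 0) (𝓝 (c * 0 * ‖y - x‖ ^ 2)) :=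
      Continuous.tendsto (by fun_prop) 0
    simpa using this.mono_left nhdsWithin_le_nhds
  exact sub_nonpos.1 (ge_of_tendsto hlim (eventually_of_mem (Ioc_mem_nhdsGT one_pos) hsegment))

end NormedSpace

theorem convexOn_inner_sub {E : Type*} [NormedAddCommGroup E] [InnerProductSpace ℝ E]
    {X : Set E} (hX : Convex ℝ X) (v x : E) : ConvexOn ℝ X fun u => ⟪v, u - x⟫ := by
  refine ⟨hX, fun u _ w _ a b _ _ hab => le_of_eq ?_⟩
  simp only [inner_sub_right, inner_add_right, real_inner_smul_right, smul_eq_mul]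
  linear_combination ⟪v, x⟫ * hab

section Module

variable {E : Type*} [AddCommGroup E] [Module ℝ E] {X : Set E} {φ ψ : E → ℝ} {x : E}

theorem IsMinOn.div_le_div_of_neg_of_pos (hφ : ConvexOn ℝ X φ) (hψ : ConvexOn ℝ X ψ)
    (hmin : IsMinOn φ {u ∈ X | ψ u ≤ 0} x) {u w : E} (hu : u ∈ X) (hw : w ∈ X)
    (hψu : ψ u < 0) (hψw : 0 < ψ w) :
    (φ x - φ w) / ψ w ≤ (φ u - φ x) / -ψ u := by
  rw [div_le_div_iff₀ hψw (neg_pos.2 hψu)]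
  -- the point of the segment `[u, w]` where the affine interpolation of `ψ` vanishes
  set t := -ψ u / (ψ w - ψ u)
  have hd : 0 < ψ w - ψ u := by linarith
  have ht : t * (ψ w - ψ u) = -ψ u := div_mul_cancel₀ _ hd.ne'
  have ht0 : 0 ≤ t := div_nonneg (neg_nonneg.2 hψu.le) hd.le
  have ht1 : 0 ≤ 1 - t := by
    rw [sub_nonneg, div_le_one hd]; linarith
  have hψz := hψ.2 hw hu ht0 ht1 (add_sub_cancel t 1)
  have hφz := hφ.2 hw hu ht0 ht1 (add_sub_cancel t 1)
  have hz : φ x ≤ φ (t • w + (1 - t) • u) := isMinOn_iff.1 hmin _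
    ⟨hψ.1 hw hu ht0 ht1 (add_sub_cancel t 1), by simp only [smul_eq_mul] at hψz; nlinarith⟩
  simp only [smul_eq_mul] at hφz
  linear_combination mul_le_mul_of_nonneg_right (hz.trans hφz) hd.le + (φ w - φ u) * ht

theorem exists_lagrange_multiplier_of_slater (hφ : ConvexOn ℝ X φ) (hψ : ConvexOn ℝ X ψ)
    (hx : x ∈ X) (hψx : ψ x ≤ 0) {x₀ : E} (hx₀ : x₀ ∈ X) (hψx₀ : ψ x₀ < 0)
    (hmin : IsMinOn φ {u ∈ X | ψ u ≤ 0} x) :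
    ∃ lam : ℝ, 0 ≤ lam ∧ lam * ψ x = 0 ∧ IsMinOn (fun u => φ u + lam * ψ u) X x := by
  set S := insert 0 ((fun w => (φ x - φ w) / ψ w) '' {w ∈ X | 0 < ψ w})
  have hS : ∀ u ∈ X, ψ u < 0 → ∀ r ∈ S, r ≤ (φ u - φ x) / -ψ u := by
    rintro u hu hψu r (rfl | ⟨w, ⟨hw, hψw⟩, rfl⟩)
    · exact div_nonneg (sub_nonneg.2 (isMinOn_iff.1 hmin u ⟨hu, hψu.le⟩)) (neg_nonneg.2 hψu.le)
    · exact hmin.div_le_div_of_neg_of_pos hφ hψ hu hw hψu hψw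
  have hSbdd : BddAbove S := ⟨_, hS x₀ hx₀ hψx₀⟩
  set lam := sSup S
  have hlam : 0 ≤ lam := le_csSup hSbdd (mem_insert 0 _)
  have hlam_le : ∀ u ∈ X, ψ u < 0 → lam * -ψ u ≤ φ u - φ x := fun u hu hψu =>
    (le_div_iff₀ (neg_pos.2 hψu)).1 (csSup_le (insert_nonempty _ _) (hS u hu hψu))
  have hcompl : lam * ψ x = 0 := by
    rcases hψx.lt_or_eq with hlt | heq
    · have := hlam_le x hx hlt
      rw [sub_self] at this
      nlinarith
    · rw [heq, mul_zero]
  refine ⟨lam, hlam, hcompl, isMinOn_iff.2 fun u hu => ?_⟩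
  rw [hcompl, add_zero]
  rcases lt_trichotomy (ψ u) 0 with hneg | hzero | hpos
  · linarith [hlam_le u hu hneg]
  · simpa [hzero] using isMinOn_iff.1 hmin u ⟨hu, hzero.le⟩
  · have := le_csSup hSbdd (mem_insert_of_mem _ ⟨u, ⟨hu, hpos⟩, rfl⟩)
    rw [div_le_iff₀ hpos] at this
    linarith

end Module

section Euclidean

variable {n : ℕ} {f φ : EuclideanSpace ℝ (Fin n) → ℝ} {C : Set (EuclideanSpace ℝ (Fin n))}
  {x : EuclideanSpace ℝ (Fin n)}

theorem exists_mem_subdiff_of_isMinOn_add (hf : ConvexOn ℝ univ f) (hφ : ConvexOn ℝ C φ)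
    (hx : x ∈ C) (hmin : IsMinOn (f + φ) C x) :
    ∃ s ∈ subdiff f x, ∀ y ∈ C, φ x ≤ φ y + ⟪s, y - x⟫ := by
  set A := {p : EuclideanSpace ℝ (Fin n) × ℝ | f p.1 - f x < p.2}
  set B := {p : EuclideanSpace ℝ (Fin n) × ℝ | p.1 ∈ C ∧ p.2 ≤ φ x - φ p.1}
  have hAconv : Convex ℝ A := by
    simpa using (hf.sub (concaveOn_const (f x) convex_univ)).convex_strict_epigraph
  have hAopen : IsOpen A :=
    isOpen_lt ((continuousOn_univ.1 (hf.continuousOn isOpen_univ)).comp continuous_fst |>.sub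
      continuous_const) continuous_snd
  have hBconv : Convex ℝ B := ((concaveOn_const (φ x) hφ.1).sub hφ).convex_hypograph
  have hAB : Disjoint A B := by
    refine Set.disjoint_left.2 fun p hA hB => ?_
    have := isMinOn_iff.1 hmin p.1 hB.1
    simp only [Pi.add_apply] at this
    linarith [hA.out, hB.2]
  obtain ⟨ℓ, c, hℓA, hℓB⟩ := geometric_hahn_banach_open hAconv hAopen hBconv hAB
  set a := -ℓ (0, 1)
  set L : EuclideanSpace ℝ (Fin n) →L[ℝ] ℝ := ℓ.comp (.inl ℝ _ ℝ)
  have hℓ : ∀ y t, ℓ (y, t) = L y - t * a := by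
    intro y t
    have : (y, t) = (y, 0) + t • ((0 : EuclideanSpace ℝ (Fin n)), (1 : ℝ)) := by simp
    rw [this, map_add, map_smul, smul_eq_mul]
    simp [L, a]
  have hcx : c ≤ L x := by simpa [hℓ] using hℓB (x, 0) ⟨hx, by simp⟩
  have ha : 0 < a := by
    have := hℓA (x, 1) (by simp [A])
    rw [hℓ] at this
    linarith
  have hL : ∀ y, L y - c ≤ (f y - f x) * a := by
    intro y
    rw [← div_le_iff₀ ha]
    refine le_of_forall_gt_imp_ge_of_dense fun t ht => ?_
    have := hℓA (y, t) ht
    rw [hℓ] at this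
    rw [div_le_iff₀ ha]
    linarith
  have hc : c = L x := le_antisymm hcx (by simpa using hL x)
  set s := (InnerProductSpace.toDual ℝ _).symm (a⁻¹ • L)
  have hs : ∀ z, a * ⟪s, z⟫ = L z := fun z => by
    simp only [s, map_smul, real_inner_smul_left, InnerProductSpace.toDual_symm_apply,
      mul_inv_cancel_left₀ ha.ne']
  refine ⟨s, fun y => ?_, fun y hy => ?_⟩
  · have : a * ⟪s, y - x⟫ ≤ a * (f y - f x) := by
      rw [hs, map_sub, ← hc, mul_comm]
      exact hL y
    linarith [le_of_mul_le_mul_left this ha]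
  · have : a * (φ x - φ y) ≤ a * ⟪s, y - x⟫ := by
      have := hℓB (y, φ x - φ y) ⟨hy, le_rfl⟩
      rw [hℓ] at this
      rw [hs, map_sub, ← hc]
      linarith
    linarith [le_of_mul_le_mul_left this ha]

theorem subdiff_nonempty (hf : ConvexOn ℝ univ f) (x : EuclideanSpace ℝ (Fin n)) :
    (subdiff f x).Nonempty :=
  let ⟨s, hs, _⟩ := exists_mem_subdiff_of_isMinOn_add hf (convexOn_const 0 (convex_singleton x))
    (mem_singleton x) (isMinOn_iff.2 fun _ hy => by rw [mem_singleton_iff.1 hy])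
  ⟨s, hs⟩

theorem exists_mem_subdiff_of_isMinOn_mul_add {c : ℝ} (hc : 0 ≤ c) (hf : ConvexOn ℝ univ f)
    (hφ : ConvexOn ℝ C φ) (hx : x ∈ C) (hmin : IsMinOn (fun y => c * f y + φ y) C x) :
    ∃ s ∈ subdiff f x, ∀ y ∈ C, φ x ≤ φ y + c * ⟪s, y - x⟫ := by
  rcases hc.eq_or_lt with rfl | hc
  · obtain ⟨s, hs⟩ := subdiff_nonempty hf x
    exact ⟨s, hs, fun y hy => by simpa using isMinOn_iff.1 hmin y hy⟩
  · have hmin' : IsMinOn (f + fun y => c⁻¹ * φ y) C x := isMinOn_iff.2 fun y hy => by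
      have := isMinOn_iff.1 hmin y hy
      simp only [Pi.add_apply]
      rw [← mul_le_mul_iff_of_pos_left hc]
      field_simp
      linarith
    obtain ⟨s, hs, hφs⟩ :=
      exists_mem_subdiff_of_isMinOn_add hf (hφ.smul (inv_nonneg.2 hc.le)) hx hmin'
    refine ⟨s, hs, fun y hy => ?_⟩
    have := mul_le_mul_of_nonneg_left (hφs y hy) hc.le
    simpa only [smul_eq_mul, mul_add, mul_inv_cancel_left₀ hc.ne'] using this

end Euclidean

section KKT

variable {n : ℕ} {g G : EuclideanSpace ℝ (Fin n) → ℝ} {X : Set (EuclideanSpace ℝ (Fin n))}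
  {x : EuclideanSpace ℝ (Fin n)}

theorem exists_kkt_of_isMinOn_lagrangian (hg : ConvexOn ℝ univ g) (hG : ConvexOn ℝ univ G)
    (hX : Convex ℝ X) (hx : x ∈ X) {lam : ℝ} (hlam : 0 ≤ lam) (w : EuclideanSpace ℝ (Fin n))
    (hmin : IsMinOn (fun u => g u + lam * G u + ⟪w, u - x⟫) X x) :
    ∃ sg ∈ subdiff g x, ∃ sG ∈ subdiff G x, ∃ v ∈ normalCone X x, sg + lam • sG + w + v = 0 := by
  obtain ⟨sg, hsg, hg_split⟩ := exists_mem_subdiff_of_isMinOn_add hg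
    (((hG.subset (subset_univ X) hX).smul hlam).add (convexOn_inner_sub hX w x)) hx
    (isMinOn_iff.2 fun u hu => by simpa [add_assoc] using isMinOn_iff.1 hmin u hu)
  obtain ⟨sG, hsG, hG_split⟩ := exists_mem_subdiff_of_isMinOn_mul_add hlam hG
    (convexOn_inner_sub hX (w + sg) x) hx (isMinOn_iff.2 fun u hu => by
      have := hg_split u hu
      simp only [Pi.add_apply, smul_eq_mul, sub_self, inner_zero_right, add_zero,
        inner_add_left] at this ⊢
      linarith)
  refine ⟨sg, hsg, sG, hsG, -(sg + lam • sG + w), fun y hy => ?_, add_neg_cancel _⟩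
  have := hG_split y hy
  simp only [sub_self, inner_zero_right, inner_add_left, inner_neg_left,
    real_inner_smul_left] at this ⊢
  linarith

end KKT

theorem stmt16_general (n : ℕ) (g G H : EuclideanSpace ℝ (Fin n) → ℝ)
    (hg : ConvexOn ℝ Set.univ g)
    (hG : ConvexOn ℝ Set.univ G)
    (X : Set (EuclideanSpace ℝ (Fin n)))
    (hXconv : Convex ℝ X) (β : ℝ)
    (xb : EuclideanSpace ℝ (Fin n)) (hxbX : xb ∈ X) (hfeas : G xb ≤ H xb)
    (sh sH : EuclideanSpace ℝ (Fin n))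
    (hslater : ∃ xhat ∈ X, G xhat - H xb - ⟪sH, xhat - xb⟫ < 0)
    (hmin : ∀ u ∈ X, G u - H xb - ⟪sH, u - xb⟫ ≤ 0 →
      g xb ≤ g u - ⟪sh, u - xb⟫ + β / 2 * ‖u - xb‖ ^ 2) :
    ∃ lam : ℝ, 0 ≤ lam ∧ lam * (G xb - H xb) = 0 ∧
      ∃ sg ∈ subdiff g xb, ∃ sG ∈ subdiff G xb, ∃ v ∈ normalCone X xb,
        sg - sh + lam • (sG - sH) + v = 0 := by
  obtain ⟨xhat, hxhatX, hxhat⟩ := hslater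
  set φ := fun u => g u + ⟪-sh, u - xb⟫
  set ψ := fun u => G u - H xb + ⟪-sH, u - xb⟫
  have hψ_apply : ∀ u, ψ u = G u - H xb - ⟪sH, u - xb⟫ := fun u => by
    simp only [ψ, inner_neg_left, sub_eq_add_neg]
  have hφ : ConvexOn ℝ X φ :=
    (hg.subset (subset_univ X) hXconv).add (convexOn_inner_sub hXconv _ _)
  have hψ : ConvexOn ℝ X ψ :=
    ((hG.subset (subset_univ X) hXconv).add_const _).add (convexOn_inner_sub hXconv _ _)
  have hψxb : ψ xb ≤ 0 := by simpa [hψ_apply] using hfeas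
  have hφmin : IsMinOn φ {u ∈ X | ψ u ≤ 0} xb :=
    (hφ.subset (sep_subset _ _) (hψ.convex_le 0)).isMinOn_of_isMinOn_add_mul_norm_sq
      ⟨hxbX, hψxb⟩ (β / 2) (isMinOn_iff.2 fun u ⟨hu, hψu⟩ => by
        simpa [φ, inner_neg_left, ← sub_eq_add_neg] using hmin u hu (hψ_apply u ▸ hψu))
  obtain ⟨lam, hlam, hcompl, hlag⟩ := exists_lagrange_multiplier_of_slater hφ hψ hxbX hψxb
    hxhatX (hψ_apply xhat ▸ hxhat) hφmin
  obtain ⟨sg, hsg, sG, hsG, v, hv, hsum⟩ := exists_kkt_of_isMinOn_lagrangian hg hG hXconv hxbX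
    hlam (-(sh + lam • sH)) (isMinOn_iff.2 fun u hu => by
      have := isMinOn_iff.1 hlag u hu
      simp only [φ, ψ, sub_self, inner_zero_right, inner_neg_left, inner_add_left,
        real_inner_smul_left] at this ⊢
      linarith)
  refine ⟨lam, hlam, by simpa [ψ] using hcompl, sg, hsg, sG, hsG, v, hv, ?_⟩
  rw [← hsum]
  module

/-- fixed points of the proximal DC iteration are KKT points: if `x̄` is
feasible, the Slater condition holds for the linearized subproblem at `x̄`, and `x̄` minimizes
its own linearized proximal subproblem, then `x̄` is a KKT point of
`min{g - h : x ∈ X, G - H ≤ 0}`. -/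
theorem stmt16 (n : ℕ) (g h G H : EuclideanSpace ℝ (Fin n) → ℝ)
    (hg : ConvexOn ℝ Set.univ g) (hh : ConvexOn ℝ Set.univ h)
    (hG : ConvexOn ℝ Set.univ G) (hH : ConvexOn ℝ Set.univ H)
    (X : Set (EuclideanSpace ℝ (Fin n))) (hXne : X.Nonempty) (hXcl : IsClosed X)
    (hXconv : Convex ℝ X) (β : ℝ) (hβ : 0 ≤ β)
    (xb : EuclideanSpace ℝ (Fin n)) (hxbX : xb ∈ X) (hfeas : G xb ≤ H xb)
    (sh sH : EuclideanSpace ℝ (Fin n))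
    (hsh : sh ∈ subdiff h xb) (hsH : sH ∈ subdiff H xb)
    (hslater : ∃ xhat ∈ X, G xhat - H xb - ⟪sH, xhat - xb⟫ < 0)
    (hmin : ∀ u ∈ X, G u - H xb - ⟪sH, u - xb⟫ ≤ 0 →
      g xb ≤ g u - ⟪sh, u - xb⟫ + β / 2 * ‖u - xb‖ ^ 2) :
    ∃ lam : ℝ, 0 ≤ lam ∧ lam * (G xb - H xb) = 0 ∧
      ∃ sg ∈ subdiff g xb, ∃ sG ∈ subdiff G xb, ∃ v ∈ normalCone X xb,
        sg - sh + lam • (sG - sH) + v = 0 :=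
  stmt16_general n g G H hg hG X hXconv β xb hxbX hfeas sh sH hslater hmin
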